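/- arXiv:2207.01332 — 4 statements merged into one kernel-verified Lean document; each statement's English description precedes it below -/
import Mathlib

section
/- Suppose φ ↦ (1/2)‖f(φ,θ)‖² is μ-strongly convex with μ > 0, L ∘ h : ℝ^n → ℝ is M-Lipschitz continuous with M > 0, the minimum value of L ∘ h is 0 and is attained at φ★, and φ* is a global minimizer of φ ↦ (1/2)‖f(φ,θ)‖² with f(φ*,θ) = 0. Then L(h(φ*)) ≤ (M·√2/√μ)·‖f(φ★,θ)‖. (Equivalently, with ψ★ = −f(φ★,θ), the free-equilibrium loss is bounded by a constant times the norm of the least control.) -/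
/-- strong convexity of the equilibrium energy plus Lipschitz continuity of the
loss bound the free-equilibrium loss by a constant times the norm of the least control. -/
theorem lcp_loss_bound {n m p : ℕ}
    (f : EuclideanSpace ℝ (Fin n) → EuclideanSpace ℝ (Fin p) → EuclideanSpace ℝ (Fin n))
    (h : EuclideanSpace ℝ (Fin n) → EuclideanSpace ℝ (Fin m))
    (L : EuclideanSpace ℝ (Fin m) → ℝ)
    (θ : EuclideanSpace ℝ (Fin p)) (μ M : ℝ) (hμ : 0 < μ) (hM : 0 < M)
    (hsc : ConvexOn ℝ Set.univ
      (fun φ : EuclideanSpace ℝ (Fin n) => (1/2) * ‖f φ θ‖^2 - (μ/2) * ‖φ‖^2))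
    (hLip : LipschitzWith (Real.toNNReal M) (fun φ => L (h φ)))
    (φopt φfree : EuclideanSpace ℝ (Fin n))
    (hmin0 : L (h φopt) = 0) (hlb : ∀ φ, 0 ≤ L (h φ))
    (hfree : f φfree θ = 0)
    (hfreemin : ∀ φ, (1/2) * ‖f φfree θ‖^2 ≤ (1/2) * ‖f φ θ‖^2) :
    L (h φfree) ≤ (M * Real.sqrt 2 / Real.sqrt μ) * ‖f φopt θ‖ := by
  set mdl : EuclideanSpace ℝ (Fin n) := (1/2 : ℝ) • φopt + (1/2 : ℝ) • φfree with hm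
  have hg0 : (1/2 : ℝ) * ‖f φfree θ‖^2 = 0 := by rw [hfree]; simp
  have key := hsc.2 (Set.mem_univ φopt) (Set.mem_univ φfree)
      (by norm_num : (0:ℝ) ≤ 1/2) (by norm_num : (0:ℝ) ≤ 1/2) (by norm_num)
  simp only [← hm, smul_eq_mul] at key
  have hmid := hfreemin mdl
  rw [hg0] at hmid
  -- parallelogram: ‖mdl‖² = (1/2)‖φopt‖² + (1/2)‖φfree‖² - (1/4)‖φopt - φfree‖²
  have hpar : ‖mdl‖^2 = (1/2) * ‖φopt‖^2 + (1/2) * ‖φfree‖^2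
      - (1/4) * ‖φopt - φfree‖^2 := by
    have h1 : mdl = (1/2 : ℝ) • (φopt + φfree) := by rw [hm, smul_add]
    have h2 := parallelogram_law_with_norm ℝ φopt φfree
    have h3 : ‖mdl‖ = (1/2) * ‖φopt + φfree‖ := by
      rw [h1, norm_smul]; norm_num
    nlinarith [norm_nonneg (φopt + φfree)]
  -- quadratic growth with constant μ/4
  have hd2 : μ * ‖φopt - φfree‖^2 ≤ 2 * ‖f φopt θ‖^2 := by
    nlinarith [key, hmid, hpar, hg0]
  set R : ℝ := Real.sqrt 2 / Real.sqrt μ * ‖f φopt θ‖ with hR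
  have hRnn : 0 ≤ R := by positivity
  have hdR : ‖φopt - φfree‖ ≤ R := by
    have hR2 : R^2 = 2 / μ * ‖f φopt θ‖^2 := by
      rw [hR, mul_pow, div_pow, Real.sq_sqrt (by norm_num : (0:ℝ) ≤ 2),
        Real.sq_sqrt hμ.le]
    have hle : ‖φopt - φfree‖^2 ≤ R^2 := by
      rw [hR2]
      rw [div_mul_eq_mul_div, le_div_iff₀ hμ, mul_comm]
      exact hd2
    calc ‖φopt - φfree‖ = Real.sqrt (‖φopt - φfree‖^2) := by
            rw [Real.sqrt_sq (norm_nonneg _)]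
      _ ≤ Real.sqrt (R^2) := Real.sqrt_le_sqrt hle
      _ = R := Real.sqrt_sq hRnn
  have hlip2 := hLip.dist_le_mul φfree φopt
  rw [Real.coe_toNNReal M hM.le] at hlip2
  have hdd : dist (L (h φfree)) (L (h φopt)) ≤ M * ‖φopt - φfree‖ := by
    calc dist (L (h φfree)) (L (h φopt)) ≤ M * dist φfree φopt := hlip2
      _ = M * ‖φopt - φfree‖ := by rw [dist_eq_norm, norm_sub_rev]
  have h4 : L (h φfree) ≤ M * ‖φopt - φfree‖ := by
    rw [Real.dist_eq, hmin0, sub_zero] at hdd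
    exact (le_abs_self _).trans hdd
  calc L (h φfree) ≤ M * ‖φopt - φfree‖ := h4
    _ ≤ M * R := by exact mul_le_mul_of_nonneg_left hdR hM.le
    _ = (M * Real.sqrt 2 / Real.sqrt μ) * ‖f φopt θ‖ := by rw [hR]; ring
end

section
/- Let f : ℝ^n × ℝ^p → ℝ^n be differentiable, and let (φ★(θ), ψ★(θ)) be differentiable functions of θ satisfying, for all θ, the constraints f(φ★,θ) + ψ★ = 0 and ∇_φ(L∘h)(φ★) = 0. Assume further that ∂_φ h(φ★) · (dφ★/dθ) = 0 and that ∂_φ f(φ★,θ)ᵀ ψ★ = ∂_φ h(φ★)ᵀ v for some vector v. Define H(θ) = (1/2)‖ψ★(θ)‖². Then dH/dθ = −ψ★ᵀ ∂_θ f(φ★,θ), i.e. ∇_θ H(θ) = −∂_θ f(φ★,θ)ᵀ ψ★(θ) = ∂_θ f(φ★,θ)ᵀ f(φ★(θ),θ). -/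
open scoped RealInnerProductSpace

/-- first-order gradient of the least-control objective
`H(θ) = (1/2)‖ψ★(θ)‖²`: under the constraints `f(φ★,θ)+ψ★=0`, `∇(L∘h)(φ★)=0`,
the tangency condition `∂h(φ★) ∘ dφ★/dθ = 0` and the KKT-stationarity condition
`∂_φ f(φ★,θ)ᵀ ψ★ ∈ range ∂h(φ★)ᵀ`, one has
`∇H(θ₀) = −∂_θ f(φ★,θ₀)ᵀ ψ★(θ₀) = ∂_θ f(φ★,θ₀)ᵀ f(φ★(θ₀),θ₀)`. -/
theorem lcp_first_order_gradient {n m p : ℕ}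
    (f : EuclideanSpace ℝ (Fin n) → EuclideanSpace ℝ (Fin p) → EuclideanSpace ℝ (Fin n))
    (h : EuclideanSpace ℝ (Fin n) → EuclideanSpace ℝ (Fin m))
    (L : EuclideanSpace ℝ (Fin m) → ℝ)
    (φs ψs : EuclideanSpace ℝ (Fin p) → EuclideanSpace ℝ (Fin n))
    (hf : Differentiable ℝ (fun q : EuclideanSpace ℝ (Fin n) × EuclideanSpace ℝ (Fin p) => f q.1 q.2))
    (hh : Differentiable ℝ h)
    (hφ : Differentiable ℝ φs) (hψ : Differentiable ℝ ψs)
    (hc1 : ∀ θ, f (φs θ) θ + ψs θ = 0)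
    (hc2 : ∀ θ, gradient (fun φ => L (h φ)) (φs θ) = 0)
    (θ₀ : EuclideanSpace ℝ (Fin p))
    (htang : (fderiv ℝ h (φs θ₀)).comp (fderiv ℝ φs θ₀) = 0)
    (hstat : ∃ v, (fderiv ℝ (fun φ => f φ θ₀) (φs θ₀)).adjoint (ψs θ₀)
        = (fderiv ℝ h (φs θ₀)).adjoint v) :
    gradient (fun θ => (1/2) * ‖ψs θ‖^2) θ₀
        = -((fderiv ℝ (fun θ => f (φs θ₀) θ) θ₀).adjoint (ψs θ₀))
    ∧ gradient (fun θ => (1/2) * ‖ψs θ‖^2) θ₀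
        = (fderiv ℝ (fun θ => f (φs θ₀) θ) θ₀).adjoint (f (φs θ₀) θ₀) := by
  classical
  have hψeq : ∀ θ, ψs θ = -(f (φs θ) θ) := fun θ =>
    eq_neg_of_add_eq_zero_right (hc1 θ)
  set D := fderiv ℝ (fun q : EuclideanSpace ℝ (Fin n) × EuclideanSpace ℝ (Fin p) =>
    f q.1 q.2) (φs θ₀, θ₀) with hDdef
  set dφ := fderiv ℝ φs θ₀ with hdφ
  set G : EuclideanSpace ℝ (Fin p) →L[ℝ] EuclideanSpace ℝ (Fin n)
    := D.comp (dφ.prod (ContinuousLinearMap.id ℝ _)) with hGdef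
  have hpair : HasFDerivAt (fun θ => ((φs θ, θ) :
        EuclideanSpace ℝ (Fin n) × EuclideanSpace ℝ (Fin p)))
      (dφ.prod (ContinuousLinearMap.id ℝ _)) θ₀ :=
    HasFDerivAt.prodMk (hφ θ₀).hasFDerivAt (hasFDerivAt_id θ₀)
  have hG : HasFDerivAt (fun θ => f (φs θ) θ) G θ₀ := by
    have := HasFDerivAt.comp (g := fun q : EuclideanSpace ℝ (Fin n) × EuclideanSpace ℝ (Fin p) => f q.1 q.2)
      (f := fun θ => (φs θ, θ)) θ₀ (hf (φs θ₀, θ₀)).hasFDerivAt hpair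
    exact this
  have hψd : HasFDerivAt ψs (-G) θ₀ := by
    have heq : (fun θ => -(f (φs θ) θ)) = ψs := funext fun θ => (hψeq θ).symm
    rw [← heq]; exact hG.neg
  have hDφ : fderiv ℝ (fun φ => f φ θ₀) (φs θ₀)
      = D.comp (ContinuousLinearMap.inl ℝ _ _) :=
    (((hf (φs θ₀, θ₀)).hasFDerivAt.comp (g := fun q : EuclideanSpace ℝ (Fin n) × EuclideanSpace ℝ (Fin p) => f q.1 q.2)
      (f := fun φ => (φ, θ₀)) (φs θ₀)
      (hasFDerivAt_prodMk_left (φs θ₀) θ₀))).fderiv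
  have hDθ : fderiv ℝ (fun θ => f (φs θ₀) θ) θ₀
      = D.comp (ContinuousLinearMap.inr ℝ _ _) :=
    (((hf (φs θ₀, θ₀)).hasFDerivAt.comp θ₀
      (hasFDerivAt_prodMk_right (φs θ₀) θ₀))).fderiv
  obtain ⟨v, hv⟩ := hstat
  set ψ := ψs θ₀ with hψ0
  set g := -((fderiv ℝ (fun θ => f (φs θ₀) θ) θ₀).adjoint ψ) with hgdef
  -- key inner-product identity
  have key : ∀ w : EuclideanSpace ℝ (Fin p), ⟪ψ, (-G) w⟫ = ⟪g, w⟫ := by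
    intro w
    have hsplit : G w
        = (fderiv ℝ (fun φ => f φ θ₀) (φs θ₀)) (dφ w)
          + (fderiv ℝ (fun θ => f (φs θ₀) θ) θ₀) w := by
      rw [hDφ, hDθ, hGdef]
      simp only [ContinuousLinearMap.comp_apply, ContinuousLinearMap.prod_apply,
        ContinuousLinearMap.coe_id', id_eq, ContinuousLinearMap.inl_apply,
        ContinuousLinearMap.inr_apply]
      rw [← map_add]
      congr 1
      simp [Prod.ext_iff]
    have htang' : (fderiv ℝ h (φs θ₀)) (dφ w) = 0 := by
      have := congrFun (congrArg DFunLike.coe htang) w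
      simpa using this
    have h1 : ⟪ψ, (fderiv ℝ (fun φ => f φ θ₀) (φs θ₀)) (dφ w)⟫ = 0 := by
      rw [← ContinuousLinearMap.adjoint_inner_left, hv,
        ContinuousLinearMap.adjoint_inner_left, htang', inner_zero_right]
    have h2 : ⟪ψ, (fderiv ℝ (fun θ => f (φs θ₀) θ) θ₀) w⟫
        = ⟪(fderiv ℝ (fun θ => f (φs θ₀) θ) θ₀).adjoint ψ, w⟫ :=
      (ContinuousLinearMap.adjoint_inner_left _ _ _).symm
    simp only [ContinuousLinearMap.neg_apply, inner_neg_right, hsplit,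
      inner_add_right, h1, h2, hgdef, inner_neg_left, zero_add]
  -- the gradient of H
  have hH : HasGradientAt (fun θ => (1/2 : ℝ) * ‖ψs θ‖^2) g θ₀ := by
    rw [hasGradientAt_iff_hasFDerivAt]
    have hfun : (fun θ => (1/2 : ℝ) * ‖ψs θ‖^2)
        = fun θ => (1/2 : ℝ) * ⟪ψs θ, ψs θ⟫ := by
      funext θ; rw [real_inner_self_eq_norm_sq]
    have hinner := (hψd.inner (𝕜 := ℝ) hψd).const_mul (1/2 : ℝ)
    have hclm : (InnerProductSpace.toDual ℝ (EuclideanSpace ℝ (Fin p))) g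
        = (1/2 : ℝ) • ((fderivInnerCLM ℝ (ψs θ₀, ψs θ₀)).comp ((-G).prod (-G))) := by
      ext w
      have hk : ⟪ψ, (-G) w⟫ = ⟪g, w⟫ := key w
      simp only [InnerProductSpace.toDual_apply_apply, ContinuousLinearMap.smul_apply,
        ContinuousLinearMap.comp_apply, ContinuousLinearMap.prod_apply, fderivInnerCLM_apply,
        smul_eq_mul]
      simp only [← hψ0]
      linarith [hk, real_inner_comm ((-G) w) ψ]
    rw [hfun, hclm]
    exact hinner
  refine ⟨hH.gradient, ?_⟩
  rw [hH.gradient, hgdef, hψ0, hψeq θ₀, map_neg, neg_neg]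
end

section
/- Combining the above: assume L∘h convex differentiable, θ a local minimizer of H where ∇H(θ) = ∂_θ f(φ★,θ)ᵀ f(φ★,θ), ∂_θ f(φ★,θ) has full row rank, and ∇(L∘h)(φ★) = 0 (feasibility of φ★). Then f(φ★,θ) = 0 and L(h(φ★)) = min over all y of L(y) restricted to the image of h on free equilibria; in particular θ attains the global minimum of the original learning problem min_θ L(h(φ*)) subject to f(φ*,θ) = 0, whenever a feasible free equilibrium exists. -/
open InnerProductSpace

/-- Global minimality at a point where a convex function has zero Fréchet derivative. -/
lemma convexOn_global_min {E : Type*} [NormedAddCommGroup E] [InnerProductSpace ℝ E]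
    {g : E → ℝ} (hconv : ConvexOn ℝ Set.univ g) {x : E}
    (hfd : HasFDerivAt g (0 : E →L[ℝ] ℝ) x) (y : E) : g x ≤ g y := by
  set ℓ : ℝ →ᵃ[ℝ] E := AffineMap.lineMap x y with hℓ
  have hq : ConvexOn ℝ Set.univ (g ∘ ℓ) := by
    have := hconv.comp_affineMap ℓ
    simpa using this
  have hℓ0 : ℓ 0 = x := by simp [hℓ]
  have hℓ1 : ℓ 1 = y := by simp [hℓ]
  have hder : HasDerivAt (g ∘ ℓ) 0 0 := by
    have hl : HasDerivAt (fun t : ℝ => ℓ t) (y - x) 0 := by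
      have : HasDerivAt (fun t : ℝ => t • (y - x) + x) ((1 : ℝ) • (y - x)) 0 := by
        simpa using ((hasDerivAt_id (0 : ℝ)).smul_const (y - x)).add_const x
      simpa [hℓ, AffineMap.lineMap_apply, one_smul, vsub_eq_sub, vadd_eq_add] using this
    have := hfd.comp_hasDerivAt_of_eq 0 hl hℓ0.symm
    simpa using this
  have hslope := hq.le_slope_of_hasDerivAt (Set.mem_univ (0 : ℝ)) (Set.mem_univ (1 : ℝ))
    one_pos hder
  have : (0 : ℝ) ≤ (g ∘ ℓ) 1 - (g ∘ ℓ) 0 := by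
    simpa [slope, sub_zero] using hslope
  have := this
  rw [Function.comp_apply, Function.comp_apply, hℓ0, hℓ1] at this
  linarith

/-- for convex differentiable `L∘h`, a local minimizer `θ` of the
least-control objective `H` whose gradient is `∂_θ f(φ★,θ)ᵀ f(φ★,θ)` with full-row-rank
(surjective) `∂_θ f(φ★,θ)` and feasible `φ★` (`∇(L∘h)(φ★)=0`) gives a free equilibrium
`f(φ★,θ)=0` attaining the global minimum of the original learning problem
`min_θ L(h(φ*)) s.t. f(φ*,θ)=0`. -/
theorem lcp_solves_original_problem {n m p : ℕ}
    (f : EuclideanSpace ℝ (Fin n) → EuclideanSpace ℝ (Fin p) → EuclideanSpace ℝ (Fin n))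
    (h : EuclideanSpace ℝ (Fin n) → EuclideanSpace ℝ (Fin m))
    (L : EuclideanSpace ℝ (Fin m) → ℝ)
    (hconv : ConvexOn ℝ Set.univ (fun φ => L (h φ)))
    (hdiff : Differentiable ℝ (fun φ => L (h φ)))
    (φs : EuclideanSpace ℝ (Fin p) → EuclideanSpace ℝ (Fin n))
    (θ : EuclideanSpace ℝ (Fin p))
    (Hobj : EuclideanSpace ℝ (Fin p) → ℝ)
    (hH : Hobj = fun θ' => (1/2) * ‖f (φs θ') θ'‖^2)
    (hgradH : gradient Hobj θ
        = (fderiv ℝ (fun θ' => f (φs θ) θ') θ).adjoint (f (φs θ) θ))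
    (hlocal : IsLocalMin Hobj θ)
    (hHdiff : DifferentiableAt ℝ Hobj θ)
    (hrank : Function.Surjective ⇑(fderiv ℝ (fun θ' => f (φs θ) θ') θ))
    (hfeas : gradient (fun φ => L (h φ)) (φs θ) = 0) :
    f (φs θ) θ = 0
    ∧ ∀ (θ' : EuclideanSpace ℝ (Fin p)) (φ' : EuclideanSpace ℝ (Fin n)),
        f φ' θ' = 0 → L (h (φs θ)) ≤ L (h φ') := by
  set A := fderiv ℝ (fun θ' => f (φs θ) θ') θ
  set v := f (φs θ) θ
  -- gradient of Hobj at θ vanishes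
  have hgrad0 : gradient Hobj θ = 0 := by
    rw [gradient, hlocal.fderiv_eq_zero]
    simp
  have hadj : A.adjoint v = 0 := by rw [← hgradH]; exact hgrad0
  have hv : v = 0 := by
    obtain ⟨w, hw⟩ := hrank v
    have hvv : ⟪v, v⟫_ℝ = ⟪A.adjoint v, w⟫_ℝ := by
      rw [ContinuousLinearMap.adjoint_inner_left, hw]
    rw [hadj, inner_zero_left] at hvv
    exact inner_self_eq_zero.mp hvv
  refine ⟨hv, fun θ' φ' _ => ?_⟩
  -- fderiv of L∘h at φs θ is zero
  have hfd : HasFDerivAt (fun φ => L (h φ)) (0 : EuclideanSpace ℝ (Fin n) →L[ℝ] ℝ) (φs θ) := by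
    have hd := (hdiff (φs θ)).hasFDerivAt
    have : fderiv ℝ (fun φ => L (h φ)) (φs θ) = 0 := by
      have := congrArg (toDual ℝ (EuclideanSpace ℝ (Fin n))) hfeas
      rw [gradient] at this
      simpa using this
    rwa [this] at hd
  exact convexOn_global_min hconv hfd φ'
end

section
/- The steady state of the recurrent-backpropagation adjoint dynamics computes the correct adjoint: if δ* satisfies ∂_φ f(φ*,θ)ᵀ δ* = ∂_φ h(φ*)ᵀ ∇L(h(φ*)) with ∂_φ f(φ*,θ) invertible, then δ* = ∂_φ f(φ*,θ)^{-ᵀ} ∂_φ h(φ*)ᵀ ∇L(h(φ*)), and the resulting update −δ*ᵀ ∂_θ f(φ*,θ) equals the implicit gradient d/dθ L(h(φ*(θ))) where φ*(θ) is the implicit equilibrium function. -/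
open scoped RealInnerProductSpace

/-- the steady state of the recurrent-backpropagation adjoint dynamics,
`∂_φ f(φ*,θ)ᵀ δ* = ∂_φ h(φ*)ᵀ ∇L(h(φ*))` with invertible `∂_φ f(φ*,θ)`, satisfies
`δ* = ∂_φ f(φ*,θ)⁻ᵀ ∂_φ h(φ*)ᵀ ∇L(h(φ*))`, and the resulting update `−δ*ᵀ ∂_θ f(φ*,θ)`
equals the implicit gradient `d/dθ L(h(φ*(θ)))|_{θ₀}`. -/
theorem rbp_adjoint_computes_implicit_gradient {n m p : ℕ}
    (f : EuclideanSpace ℝ (Fin n) → EuclideanSpace ℝ (Fin p) → EuclideanSpace ℝ (Fin n))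
    (h : EuclideanSpace ℝ (Fin n) → EuclideanSpace ℝ (Fin m))
    (L : EuclideanSpace ℝ (Fin m) → ℝ)
    (θ₀ : EuclideanSpace ℝ (Fin p)) (φs δs : EuclideanSpace ℝ (Fin n))
    (hf : DifferentiableAt ℝ
      (fun q : EuclideanSpace ℝ (Fin n) × EuclideanSpace ℝ (Fin p) => f q.1 q.2) (φs, θ₀))
    (hh : DifferentiableAt ℝ h φs) (hL : DifferentiableAt ℝ L (h φs))
    (heq0 : f φs θ₀ = 0)
    (J : EuclideanSpace ℝ (Fin n) ≃L[ℝ] EuclideanSpace ℝ (Fin n))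
    (hJ : (J : EuclideanSpace ℝ (Fin n) →L[ℝ] EuclideanSpace ℝ (Fin n))
        = fderiv ℝ (fun φ => f φ θ₀) φs)
    (hδ : (fderiv ℝ (fun φ => f φ θ₀) φs).adjoint δs
        = (fderiv ℝ h φs).adjoint (gradient L (h φs)))
    (φstar : EuclideanSpace ℝ (Fin p) → EuclideanSpace ℝ (Fin n))
    (hφ0 : φstar θ₀ = φs)
    (hφd : DifferentiableAt ℝ φstar θ₀)
    (himpl : ∀ᶠ θ in nhds θ₀, f (φstar θ) θ = 0) :
    δs = (J.symm : EuclideanSpace ℝ (Fin n) →L[ℝ] EuclideanSpace ℝ (Fin n)).adjoint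
          ((fderiv ℝ h φs).adjoint (gradient L (h φs)))
    ∧ ∀ dθ, fderiv ℝ (fun θ => L (h (φstar θ))) θ₀ dθ
        = -⟪δs, (fderiv ℝ (fun θ => f φs θ) θ₀) dθ⟫ := by
  have hA : HasFDerivAt (fun φ => f φ θ₀) ((fderiv ℝ (fun q : EuclideanSpace ℝ (Fin n) × EuclideanSpace ℝ (Fin p) => f q.1 q.2) (φs, θ₀)).comp (ContinuousLinearMap.inl ℝ (EuclideanSpace ℝ (Fin n)) (EuclideanSpace ℝ (Fin p)))) φs :=
    HasFDerivAt.comp (f := fun e : EuclideanSpace ℝ (Fin n) => (e, θ₀)) φs hf.hasFDerivAt (hasFDerivAt_prodMk_left (𝕜 := ℝ) φs θ₀)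
  have hB : HasFDerivAt (fun θ => f φs θ) ((fderiv ℝ (fun q : EuclideanSpace ℝ (Fin n) × EuclideanSpace ℝ (Fin p) => f q.1 q.2) (φs, θ₀)).comp (ContinuousLinearMap.inr ℝ (EuclideanSpace ℝ (Fin n)) (EuclideanSpace ℝ (Fin p)))) θ₀ :=
    HasFDerivAt.comp (f := fun e : EuclideanSpace ℝ (Fin p) => (φs, e)) θ₀ hf.hasFDerivAt (hasFDerivAt_prodMk_right (𝕜 := ℝ) φs θ₀)
  set φ' := fderiv ℝ φstar θ₀ with hφ'
  have hfd' : HasFDerivAt (fun q : EuclideanSpace ℝ (Fin n) × EuclideanSpace ℝ (Fin p) => f q.1 q.2) (fderiv ℝ (fun q : EuclideanSpace ℝ (Fin n) × EuclideanSpace ℝ (Fin p) => f q.1 q.2) (φs, θ₀)) (φstar θ₀, θ₀) := by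
    rw [hφ0]; exact hf.hasFDerivAt
  have hC : HasFDerivAt (fun θ => f (φstar θ) θ)
      ((fderiv ℝ (fun q : EuclideanSpace ℝ (Fin n) × EuclideanSpace ℝ (Fin p) => f q.1 q.2) (φs, θ₀)).comp (φ'.prod (ContinuousLinearMap.id ℝ (EuclideanSpace ℝ (Fin p))))) θ₀ := by
    have := HasFDerivAt.comp (f := fun x => (φstar x, x)) θ₀ hfd' (hφd.hasFDerivAt.prodMk (hasFDerivAt_id θ₀))
    exact this
  have hC0 : (fderiv ℝ (fun q : EuclideanSpace ℝ (Fin n) × EuclideanSpace ℝ (Fin p) => f q.1 q.2) (φs, θ₀)).comp (φ'.prod (ContinuousLinearMap.id ℝ (EuclideanSpace ℝ (Fin p)))) = 0 := by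
    have h1 : fderiv ℝ (fun θ => f (φstar θ) θ) θ₀
        = (fderiv ℝ (fun q : EuclideanSpace ℝ (Fin n) × EuclideanSpace ℝ (Fin p) => f q.1 q.2) (φs, θ₀)).comp (φ'.prod (ContinuousLinearMap.id ℝ (EuclideanSpace ℝ (Fin p)))) := hC.fderiv
    have h2 : fderiv ℝ (fun θ => f (φstar θ) θ) θ₀
        = fderiv ℝ (fun _ : EuclideanSpace ℝ (Fin p) => (0 : EuclideanSpace ℝ (Fin n))) θ₀ := Filter.EventuallyEq.fderiv_eq himpl
    rw [h1, fderiv_fun_const] at h2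
    simpa using h2
  have hJA : (J : EuclideanSpace ℝ (Fin n) →L[ℝ] EuclideanSpace ℝ (Fin n)) = (fderiv ℝ (fun q : EuclideanSpace ℝ (Fin n) × EuclideanSpace ℝ (Fin p) => f q.1 q.2) (φs, θ₀)).comp (ContinuousLinearMap.inl ℝ (EuclideanSpace ℝ (Fin n)) (EuclideanSpace ℝ (Fin p))) := by
    rw [hJ, hA.fderiv]
  have hkey : ∀ dθ, (J : EuclideanSpace ℝ (Fin n) →L[ℝ] EuclideanSpace ℝ (Fin n)) (φ' dθ)
      + ((fderiv ℝ (fun q : EuclideanSpace ℝ (Fin n) × EuclideanSpace ℝ (Fin p) => f q.1 q.2) (φs, θ₀)).comp (ContinuousLinearMap.inr ℝ (EuclideanSpace ℝ (Fin n)) (EuclideanSpace ℝ (Fin p)))) dθ = 0 := by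
    intro dθ
    have h3 : ((fderiv ℝ (fun q : EuclideanSpace ℝ (Fin n) × EuclideanSpace ℝ (Fin p) => f q.1 q.2) (φs, θ₀)).comp (φ'.prod (ContinuousLinearMap.id ℝ (EuclideanSpace ℝ (Fin p))))) dθ = 0 := by
      rw [hC0]; rfl
    have hsplit : ((φ' dθ, dθ) : EuclideanSpace ℝ (Fin n) × EuclideanSpace ℝ (Fin p)) = (φ' dθ, 0) + (0, dθ) := by simp
    simp only [ContinuousLinearMap.comp_apply, ContinuousLinearMap.prod_apply,
      ContinuousLinearMap.id_apply] at h3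
    rw [hsplit, map_add] at h3
    rw [hJA]
    simpa using h3
  have hgrad : ∀ v : EuclideanSpace ℝ (Fin m),
      ⟪gradient L (h φs), v⟫ = fderiv ℝ L (h φs) v := by
    intro v
    simp [gradient, InnerProductSpace.toDual_symm_apply]
  constructor
  · rw [← hδ]
    have hcomp : (fderiv ℝ (fun φ => f φ θ₀) φs).comp
        (J.symm : EuclideanSpace ℝ (Fin n) →L[ℝ] EuclideanSpace ℝ (Fin n)) = ContinuousLinearMap.id ℝ (EuclideanSpace ℝ (Fin n)) := by
      rw [← hJ]; ext x; simp
    calc δs = ContinuousLinearMap.id ℝ (EuclideanSpace ℝ (Fin n)) δs := rfl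
      _ = (ContinuousLinearMap.id ℝ (EuclideanSpace ℝ (Fin n))).adjoint δs := by
          rw [ContinuousLinearMap.adjoint_id]
      _ = ((fderiv ℝ (fun φ => f φ θ₀) φs).comp (J.symm : EuclideanSpace ℝ (Fin n) →L[ℝ] EuclideanSpace ℝ (Fin n))).adjoint δs := by
          rw [hcomp]
      _ = (J.symm : EuclideanSpace ℝ (Fin n) →L[ℝ] EuclideanSpace ℝ (Fin n)).adjoint ((fderiv ℝ (fun φ => f φ θ₀) φs).adjoint δs) := by
          rw [ContinuousLinearMap.adjoint_comp]; rfl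
  · intro dθ
    have hh' : HasFDerivAt h (fderiv ℝ h φs) (φstar θ₀) := by
      rw [hφ0]; exact hh.hasFDerivAt
    have h1 : HasFDerivAt (fun θ => h (φstar θ)) ((fderiv ℝ h φs).comp φ') θ₀ :=
      hh'.comp θ₀ hφd.hasFDerivAt
    have hL' : HasFDerivAt L (fderiv ℝ L (h φs)) (h (φstar θ₀)) := by
      rw [hφ0]; exact hL.hasFDerivAt
    have hcomp : HasFDerivAt (fun θ => L (h (φstar θ)))
        ((fderiv ℝ L (h φs)).comp ((fderiv ℝ h φs).comp φ')) θ₀ := hL'.comp θ₀ h1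
    have hJφ : (J : EuclideanSpace ℝ (Fin n) →L[ℝ] EuclideanSpace ℝ (Fin n)) (φ' dθ)
        = -(((fderiv ℝ (fun q : EuclideanSpace ℝ (Fin n) × EuclideanSpace ℝ (Fin p) => f q.1 q.2) (φs, θ₀)).comp (ContinuousLinearMap.inr ℝ (EuclideanSpace ℝ (Fin n)) (EuclideanSpace ℝ (Fin p)))) dθ) :=
      eq_neg_of_add_eq_zero_left (hkey dθ)
    calc fderiv ℝ (fun θ => L (h (φstar θ))) θ₀ dθ
        = fderiv ℝ L (h φs) ((fderiv ℝ h φs) (φ' dθ)) := by rw [hcomp.fderiv]; rfl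
      _ = ⟪gradient L (h φs), (fderiv ℝ h φs) (φ' dθ)⟫ := (hgrad _).symm
      _ = ⟪(fderiv ℝ h φs).adjoint (gradient L (h φs)), φ' dθ⟫ :=
          (ContinuousLinearMap.adjoint_inner_left _ _ _).symm
      _ = ⟪(fderiv ℝ (fun φ => f φ θ₀) φs).adjoint δs, φ' dθ⟫ := by rw [hδ]
      _ = ⟪δs, (fderiv ℝ (fun φ => f φ θ₀) φs) (φ' dθ)⟫ :=
          ContinuousLinearMap.adjoint_inner_left _ _ _
      _ = ⟪δs, (J : EuclideanSpace ℝ (Fin n) →L[ℝ] EuclideanSpace ℝ (Fin n)) (φ' dθ)⟫ := by rw [hJ]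
      _ = ⟪δs, -(((fderiv ℝ (fun q : EuclideanSpace ℝ (Fin n) × EuclideanSpace ℝ (Fin p) => f q.1 q.2) (φs, θ₀)).comp (ContinuousLinearMap.inr ℝ (EuclideanSpace ℝ (Fin n)) (EuclideanSpace ℝ (Fin p)))) dθ)⟫ := by rw [hJφ]
      _ = -⟪δs, (fderiv ℝ (fun θ => f φs θ) θ₀) dθ⟫ := by
          rw [hB.fderiv, inner_neg_right]
end
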